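/- Let k ≥ 3 and suppose c = (m_1, m_2) ∈ F_2^{2k} differs from a codeword (m, m·G_k) of L_k in exactly one coordinate. If w(m_1 + m_2) = 1 then the error can be corrected: the unique codeword at distance 1 from c is (m_1, m_1) or (m_2, m_2) according to whether w(m_1) is even or odd; if w(m_1 + m_2) = k − 1, it is (m_1, m̄_1) or (m̄_2, m_2) according to whether w(m_1) is odd or even. -/

import Mathlib

/-- the k×k matrix over F₂ with 0 on the diagonal and 1 elsewhere -/
def G (k : ℕ) : Matrix (Fin k) (Fin k) (ZMod 2) := fun i j => if i = j then 0 else 1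

/-!
Over `F₂` we have `G k = J - 1`, so the encoding of `m` is `m` itself when `w(m)` is even and its
complement when `w(m)` is odd. A single error lies either in the first half, so that `m = m₁`, or
in the second half, so that `m₂` encodes a neighbour `m` of `m₁`, whose weight has the opposite
parity. Complementation turns a distance `d` into `k - d`, so in each of the four cases
`d(m₁, m₂)` is `1` or `k - 1`; as `k ≥ 3` these differ, and together with the parity of `w(m₁)`
they determine which case occurred.
-/

theorem add_one_add_one {ι : Type*} (x : ι → ZMod 2) : (fun i => (x i + 1) + 1) = x := by
  funext i; generalize x i = a; revert a; decide

theorem hammingDist_add_hammingDist_eq_one {ι κ : Type*} [Fintype ι] [Fintype κ]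
    {β : ι → Type*} {γ : κ → Type*} [∀ i, DecidableEq (β i)] [∀ j, DecidableEq (γ j)]
    {a b : ∀ i, β i} {c d : ∀ j, γ j} (h : hammingDist a b + hammingDist c d = 1) :
    (a = b ∧ hammingDist c d = 1) ∨ (hammingDist a b = 1 ∧ c = d) := by
  rcases Nat.add_eq_one_iff.mp h with ⟨hab, hcd⟩ | ⟨hab, hcd⟩
  · exact .inl ⟨hammingDist_eq_zero.mp hab, hcd⟩
  · exact .inr ⟨hab, hammingDist_eq_zero.mp hcd⟩

section Hamming

variable {ι : Type*} [Fintype ι]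

theorem natCast_hammingNorm_eq_sum (x : ι → ZMod 2) : (hammingNorm x : ZMod 2) = ∑ i, x i := by
  have hx : ∀ i, x i = if x i ≠ 0 then 1 else 0 := fun i => by
    generalize x i = a; revert a; decide
  rw [Finset.sum_congr rfl fun i _ => hx i, Finset.sum_boole, hammingNorm]

theorem natCast_hammingDist_eq_add (x y : ι → ZMod 2) :
    (hammingDist x y : ZMod 2) = hammingNorm x + hammingNorm y := by
  simp only [hammingDist_eq_hammingNorm, natCast_hammingNorm_eq_sum, Pi.add_apply, Pi.neg_apply,
    Finset.sum_add_distrib, ZMod.neg_eq_self_mod_two]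

theorem even_hammingNorm_iff_odd_of_hammingDist_eq_one {x y : ι → ZMod 2}
    (h : hammingDist x y = 1) : Even (hammingNorm x) ↔ Odd (hammingNorm y) := by
  have hxy := natCast_hammingDist_eq_add x y
  rw [h, Nat.cast_one] at hxy
  rw [← ZMod.natCast_eq_zero_iff_even, ← ZMod.natCast_eq_one_iff_odd]
  revert hxy; generalize (hammingNorm x : ZMod 2) = a; generalize (hammingNorm y : ZMod 2) = b
  revert a b; decide

theorem hammingDist_add_hammingDist_compl (x y : ι → ZMod 2) :
    hammingDist x y + hammingDist x (fun i => y i + 1) = Fintype.card ι := by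
  have hne : ∀ i, (x i ≠ y i + 1) ↔ ¬ (x i ≠ y i) := fun i => by
    generalize x i = a; generalize y i = b; revert a b; decide
  simp only [hammingDist, hne, Finset.card_filter_add_card_filter_not, Finset.card_univ]

end Hamming

section Code

variable {k : ℕ}

theorem vecMul_G (m : Fin k → ZMod 2) :
    Matrix.vecMul m (G k) = fun j => m j + hammingNorm m := by
  have hG : G k = Matrix.of (fun _ _ => 1) - 1 := by
    ext i j
    by_cases h : i = j <;> simp [G, h]
  funext j
  rw [hG, Matrix.vecMul_sub, Matrix.vecMul_one, natCast_hammingNorm_eq_sum]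
  simp [Matrix.vecMul, dotProduct, CharTwo.sub_eq_add, add_comm]

theorem vecMul_G_of_even {m : Fin k → ZMod 2} (h : Even (hammingNorm m)) :
    Matrix.vecMul m (G k) = m := by
  simp [vecMul_G, ZMod.natCast_eq_zero_iff_even.mpr h]

theorem vecMul_G_of_odd {m : Fin k → ZMod 2} (h : Odd (hammingNorm m)) :
    Matrix.vecMul m (G k) = fun j => m j + 1 := by
  simp [vecMul_G, ZMod.natCast_eq_one_iff_odd.mpr h]

theorem codeword_of_hammingDist_add_eq_one {m₁ m₂ m : Fin k → ZMod 2}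
    (h : hammingDist m₁ m + hammingDist m₂ (Matrix.vecMul m (G k)) = 1) :
    (Even (hammingNorm m₁) ∧ hammingDist m₁ m₂ = 1 ∧ (m, Matrix.vecMul m (G k)) = (m₁, m₁)) ∨
    (Odd (hammingNorm m₁) ∧ hammingDist m₁ m₂ = 1 ∧ (m, Matrix.vecMul m (G k)) = (m₂, m₂)) ∨
    (Odd (hammingNorm m₁) ∧ hammingDist m₁ m₂ = k - 1 ∧
      (m, Matrix.vecMul m (G k)) = (m₁, fun i => m₁ i + 1)) ∨
    (Even (hammingNorm m₁) ∧ hammingDist m₁ m₂ = k - 1 ∧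
      (m, Matrix.vecMul m (G k)) = ((fun i => m₂ i + 1), m₂)) := by
  rcases hammingDist_add_hammingDist_eq_one h with ⟨rfl, h₂⟩ | ⟨h₁, rfl⟩
  · rcases Nat.even_or_odd (hammingNorm m₁) with he | ho
    · rw [vecMul_G_of_even he, hammingDist_comm] at h₂
      rw [vecMul_G_of_even he]
      exact .inl ⟨he, h₂, rfl⟩
    · rw [vecMul_G_of_odd ho] at h₂
      have hcompl := hammingDist_add_hammingDist_compl m₂ m₁
      rw [h₂, Fintype.card_fin, hammingDist_comm] at hcompl
      rw [vecMul_G_of_odd ho]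
      exact .inr <| .inr <| .inl ⟨ho, by omega, rfl⟩
  · rcases Nat.even_or_odd (hammingNorm m₁) with he | ho
    · have hm : Odd (hammingNorm m) := (even_hammingNorm_iff_odd_of_hammingDist_eq_one h₁).mp he
      have hcompl := hammingDist_add_hammingDist_compl m₁ m
      rw [h₁, Fintype.card_fin] at hcompl
      rw [vecMul_G_of_odd hm, add_one_add_one]
      exact .inr <| .inr <| .inr ⟨he, by omega, rfl⟩
    · have hm : Even (hammingNorm m) :=
        (even_hammingNorm_iff_odd_of_hammingDist_eq_one (by rwa [hammingDist_comm])).mpr ho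
      rw [vecMul_G_of_even hm]
      exact .inr <| .inl ⟨ho, h₁, rfl⟩

end Code

theorem stmt17_general (k : ℕ) (hk : 3 ≤ k) (m₁ m₂ : Fin k → ZMod 2) :
    (hammingDist m₁ m₂ = 1 →
      (Even (hammingNorm m₁) →
        ∀ m : Fin k → ZMod 2,
          hammingDist m₁ m + hammingDist m₂ (Matrix.vecMul m (G k)) = 1 →
          (m, Matrix.vecMul m (G k)) = (m₁, m₁)) ∧
      (Odd (hammingNorm m₁) →
        ∀ m : Fin k → ZMod 2,
          hammingDist m₁ m + hammingDist m₂ (Matrix.vecMul m (G k)) = 1 →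
          (m, Matrix.vecMul m (G k)) = (m₂, m₂))) ∧
    (hammingDist m₁ m₂ = k - 1 →
      (Odd (hammingNorm m₁) →
        ∀ m : Fin k → ZMod 2,
          hammingDist m₁ m + hammingDist m₂ (Matrix.vecMul m (G k)) = 1 →
          (m, Matrix.vecMul m (G k)) = (m₁, fun i => m₁ i + 1)) ∧
      (Even (hammingNorm m₁) →
        ∀ m : Fin k → ZMod 2,
          hammingDist m₁ m + hammingDist m₂ (Matrix.vecMul m (G k)) = 1 →
          (m, Matrix.vecMul m (G k)) = ((fun i => m₂ i + 1), m₂))) := by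
  have hk' : 1 ≠ k - 1 := by omega
  refine ⟨fun hd => ⟨fun hpar m hm => ?_, fun hpar m hm => ?_⟩,
    fun hd => ⟨fun hpar m hm => ?_, fun hpar m hm => ?_⟩⟩ <;>
  rcases codeword_of_hammingDist_add_eq_one hm with
    ⟨he, hd', hc⟩ | ⟨ho, hd', hc⟩ | ⟨ho, hd', hc⟩ | ⟨he, hd', hc⟩ <;>
  first
  | exact hc
  | exact absurd (hd.symm.trans hd') hk'
  | exact absurd (hd'.symm.trans hd) hk'
  | exact absurd he (Nat.not_even_iff_odd.mpr hpar)
  | exact absurd hpar (Nat.not_even_iff_odd.mpr ho)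

theorem stmt17 (k : ℕ) (hk : 3 ≤ k) (m₁ m₂ : Fin k → ZMod 2)
    (herr : ∃ m : Fin k → ZMod 2,
      hammingDist m₁ m + hammingDist m₂ (Matrix.vecMul m (G k)) = 1) :
    (hammingDist m₁ m₂ = 1 →
      (Even (hammingNorm m₁) →
        ∀ m : Fin k → ZMod 2,
          hammingDist m₁ m + hammingDist m₂ (Matrix.vecMul m (G k)) = 1 →
          (m, Matrix.vecMul m (G k)) = (m₁, m₁)) ∧
      (Odd (hammingNorm m₁) →
        ∀ m : Fin k → ZMod 2,
          hammingDist m₁ m + hammingDist m₂ (Matrix.vecMul m (G k)) = 1 →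
          (m, Matrix.vecMul m (G k)) = (m₂, m₂))) ∧
    (hammingDist m₁ m₂ = k - 1 →
      (Odd (hammingNorm m₁) →
        ∀ m : Fin k → ZMod 2,
          hammingDist m₁ m + hammingDist m₂ (Matrix.vecMul m (G k)) = 1 →
          (m, Matrix.vecMul m (G k)) = (m₁, fun i => m₁ i + 1)) ∧
      (Even (hammingNorm m₁) →
        ∀ m : Fin k → ZMod 2,
          hammingDist m₁ m + hammingDist m₂ (Matrix.vecMul m (G k)) = 1 →
          (m, Matrix.vecMul m (G k)) = ((fun i => m₂ i + 1), m₂))) :=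
  stmt17_general k hk m₁ m₂
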